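/- Let λ(x,y) = 2x² + ax − 3y³ − 2cy² − by and let η be the differential operator η(g) = −x ∂g/∂x + y ∂g/∂y. For (x,y) with x ≠ 0 and y ≠ 0, the system λ = 0, ηλ = 0, η²λ = 0 holds if and only if x² = y²(c + 4y), a = −y²(4c + 15y)/x, and b = −2y(2c + 5y). -/

import Mathlib

/-!
The operator `η = −x ∂ₓ + y ∂_y` multiplies the monomial `xᵐ yⁿ` by its weight `n − m`, so
`λ`, `ηλ`, `η²λ` all lie in the span of `x², ax, y³, cy², by`, with coefficients read off from the
weights `−2, −1, 3, 2, 1`. The system `λ = ηλ = η²λ = 0` is therefore linear in `x²`, `ax` and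
`by`, with invertible matrix; solving it and dividing by `x` and `y` gives the result.
-/

/-- Partial derivative in the first variable. -/
noncomputable def px (g : ℝ × ℝ → ℝ) (p : ℝ × ℝ) : ℝ := deriv (fun s => g (s, p.2)) p.1

/-- Partial derivative in the second variable. -/
noncomputable def py (g : ℝ × ℝ → ℝ) (p : ℝ × ℝ) : ℝ := deriv (fun s => g (p.1, s)) p.2

/-- The vector field `η = −x ∂/∂x + y ∂/∂y` applied to a function. -/
noncomputable def eta (g : ℝ × ℝ → ℝ) (p : ℝ × ℝ) : ℝ := -p.1 * px g p + p.2 * py g p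

/-- The Jacobian determinant of the unfolding `G`. -/
noncomputable def lam (a b c : ℝ) (p : ℝ × ℝ) : ℝ :=
  2 * p.1 ^ 2 + a * p.1 - 3 * p.2 ^ 3 - 2 * c * p.2 ^ 2 - b * p.2

theorem eta_add_separated (f g : ℝ → ℝ) :
    eta (fun p => f p.1 + g p.2) = fun p => -p.1 * deriv f p.1 + p.2 * deriv g p.2 := by
  funext p
  simp only [eta, px, py, deriv_add_const, deriv_const_add]

def quadAddCubic (α β γ δ ε : ℝ) (p : ℝ × ℝ) : ℝ :=
  α * p.1 ^ 2 + β * p.1 + (γ * p.2 ^ 3 + δ * p.2 ^ 2 + ε * p.2)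

theorem eta_quadAddCubic (α β γ δ ε : ℝ) :
    eta (quadAddCubic α β γ δ ε) = quadAddCubic (-2 * α) (-β) (3 * γ) (2 * δ) ε := by
  have hf (s : ℝ) : deriv (fun s => α * s ^ 2 + β * s) s = 2 * α * s + β := by
    rw [HasDerivAt.deriv (f := fun s => α * s ^ 2 + β * s)
      (((hasDerivAt_pow 2 s).const_mul α).add ((hasDerivAt_id s).const_mul β))]
    ring
  have hg (s : ℝ) : deriv (fun s => γ * s ^ 3 + δ * s ^ 2 + ε * s) s =
      3 * γ * s ^ 2 + 2 * δ * s + ε := by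
    rw [HasDerivAt.deriv (f := fun s => γ * s ^ 3 + δ * s ^ 2 + ε * s)
      ((((hasDerivAt_pow 3 s).const_mul γ).add ((hasDerivAt_pow 2 s).const_mul δ)).add
        ((hasDerivAt_id s).const_mul ε))]
    ring
  refine (eta_add_separated (fun s => α * s ^ 2 + β * s)
    (fun s => γ * s ^ 3 + δ * s ^ 2 + ε * s)).trans ?_
  funext p
  simp only [hf, hg, quadAddCubic]
  ring

theorem lam_eq_quadAddCubic (a b c : ℝ) : lam a b c = quadAddCubic 2 a (-3) (-2 * c) (-b) := by
  funext p
  simp only [lam, quadAddCubic]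
  ring

theorem eta_lam_apply (a b c x y : ℝ) :
    eta (lam a b c) (x, y) = -4 * x ^ 2 - a * x - 9 * y ^ 3 - 4 * c * y ^ 2 - b * y := by
  simp only [lam_eq_quadAddCubic, eta_quadAddCubic, quadAddCubic]
  ring

theorem eta_eta_lam_apply (a b c x y : ℝ) :
    eta (eta (lam a b c)) (x, y) = 8 * x ^ 2 + a * x - 27 * y ^ 3 - 8 * c * y ^ 2 - b * y := by
  simp only [lam_eq_quadAddCubic, eta_quadAddCubic, quadAddCubic]
  ring

theorem swallowtail_linear_system (X A B c y : ℝ) :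
    (2 * X + A - 3 * y ^ 3 - 2 * c * y ^ 2 - B = 0 ∧
      -4 * X - A - 9 * y ^ 3 - 4 * c * y ^ 2 - B = 0 ∧
      8 * X + A - 27 * y ^ 3 - 8 * c * y ^ 2 - B = 0) ↔
    (X = y ^ 2 * (c + 4 * y) ∧ A = -y ^ 2 * (4 * c + 15 * y) ∧
      B = -2 * y * (2 * c + 5 * y) * y) := by
  constructor
  · rintro ⟨h0, h1, h2⟩
    refine ⟨?_, ?_, ?_⟩ <;> linarith
  · rintro ⟨hX, hA, hB⟩
    refine ⟨?_, ?_, ?_⟩ <;> linarith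

/-- For `x ≠ 0`, `y ≠ 0`, the system `λ = ηλ = η²λ = 0` holds iff
`x² = y²(c+4y)`, `a = −y²(4c+15y)/x` and `b = −2y(2c+5y)`. -/
theorem stmt6 (a b c x y : ℝ) (hx : x ≠ 0) (hy : y ≠ 0) :
    (lam a b c (x, y) = 0 ∧ eta (lam a b c) (x, y) = 0 ∧
      eta (eta (lam a b c)) (x, y) = 0) ↔
    (x ^ 2 = y ^ 2 * (c + 4 * y) ∧
      a = -y ^ 2 * (4 * c + 15 * y) / x ∧
      b = -2 * y * (2 * c + 5 * y)) := by
  rw [eta_eta_lam_apply, eta_lam_apply, eq_div_iff hx, show b = _ ↔ _ from (mul_left_inj' hy).symm]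
  exact swallowtail_linear_system (x ^ 2) (a * x) (b * y) c y
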